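/- arXiv:2512.17599 — 4 statements merged into one kernel-verified Lean document; each statement's English description precedes it below -/
import Mathlib

section
/- For ν > 0 and ħ > 0, the Laplace integral of the Borel transform BW(ζ) = (1/(2ζ))(1/(e^{ζ/(2ν)}-1) + 1/(e^{ζ/(2ν)}+1) - 2ν/ζ) along the positive real axis converges, and the Borel sum of e^{W(ħ)} equals e^{ν/ħ} Γ(ν/ħ + 1/2) / (√(2π) (ν/ħ)^{ν/ħ}) (Binet's formula). -/
/-!
With `x = ν/ħ` and the substitution `ζ = 2νt`, the Laplace integral becomes
`J(x) = ∫₀^∞ e^{-2xt} g(t) dt` for the bounded kernel `g(t) = (1/sinh t - 1/t)/(2t)`.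
Binet's formula `J(x) = G(x) := log Γ(x + 1/2) - x log x + x - log √(2π)` holds because both
sides obey the same difference equation: `J(x) - J(x+1)` is evaluated by an integration by
parts and two Frullani integrals, `G(x) - G(x+1)` by `Γ(y+1) = y Γ(y)`. Hence `J - G` is
`1`-periodic, and it tends to `0` along `x + n`: `J` because `|g| ≤ 1/2`, `G` by Stirling's
formula combined with Euler's limit formula for `Γ`. Exponentiating `J(x) = G(x)` gives the
theorem.
-/

open MeasureTheory

/-- BW(ζ) = (1/(2ζ))(1/(e^{ζ/(2ν)}-1) + 1/(e^{ζ/(2ν)}+1) - 2ν/ζ) on the real line. -/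
noncomputable def weberBorelTransformReal (ν ζ : ℝ) : ℝ :=
  (1 / (2 * ζ)) *
    (1 / (Real.exp (ζ / (2 * ν)) - 1) + 1 / (Real.exp (ζ / (2 * ν)) + 1) - 2 * ν / ζ)

open Real Filter Set Topology

namespace Binet

lemma sinh_le_mul_cosh {t : ℝ} (ht : 0 ≤ t) : sinh t ≤ t * cosh t := by
  have hmono : Monotone fun y => y * cosh y - sinh y := by
    refine monotone_of_hasDerivAt_nonneg (f' := fun y => y * sinh y) (fun y => ?_) fun y => ?_
    · exact (((hasDerivAt_id' y).fun_mul (hasDerivAt_cosh y)).fun_sub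
        (hasDerivAt_sinh y)).congr_deriv (by ring)
    · rcases le_total 0 y with hy | hy
      · exact mul_nonneg hy (sinh_nonneg_iff.2 hy)
      · exact mul_nonneg_of_nonpos_of_nonpos hy (sinh_nonpos_iff.2 hy)
  simpa using hmono ht

lemma cosh_sub_one_le_mul_sinh {t : ℝ} (ht : 0 ≤ t) : cosh t - 1 ≤ t * sinh t := by
  have hu : 0 ≤ t / 2 := by positivity
  have h := sinh_le_mul_cosh hu
  have hs := sinh_nonneg_iff.2 hu
  -- half-angle formulas: `cosh t - 1 = 2 sinh² (t/2)` and `sinh t = 2 sinh (t/2) cosh (t/2)`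
  rw [show t = 2 * (t / 2) by ring, cosh_two_mul, sinh_two_mul, cosh_sq]
  nlinarith [mul_le_mul_of_nonneg_left h hs]

lemma sinh_sub_self_le {t : ℝ} (ht : 0 ≤ t) : sinh t - t ≤ t ^ 2 * sinh t := by
  nlinarith [sinh_le_mul_cosh ht, cosh_sub_one_le_mul_sinh ht]

/-- The Borel transform `BW` after the substitution `ζ = 2νt`,
see `weberBorelTransformReal_eq`. -/
noncomputable def binetKernel (t : ℝ) : ℝ := (1 / (2 * t)) * (1 / sinh t - 1 / t)

lemma abs_binetKernel_le {t : ℝ} (ht : 0 < t) : |binetKernel t| ≤ 1 / 2 := by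
  have hs : 0 < sinh t := sinh_pos_iff.2 ht
  have hts : t ≤ sinh t := self_le_sinh_iff.2 ht.le
  have hkernel : binetKernel t = -((sinh t - t) / (2 * t ^ 2 * sinh t)) := by
    rw [binetKernel]
    field_simp
    ring
  rw [hkernel, abs_neg, abs_of_nonneg (by positivity), div_le_iff₀ (by positivity)]
  linarith [sinh_sub_self_le ht.le]

lemma measurable_binetKernel : Measurable binetKernel := by
  unfold binetKernel
  fun_prop

lemma norm_exp_neg_mul_binetKernel_le (a : ℝ) {t : ℝ} (ht : 0 < t) :
    ‖exp (-a * t) * binetKernel t‖ ≤ exp (-a * t) * (1 / 2) := by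
  rw [norm_mul, norm_of_nonneg (exp_pos _).le, Real.norm_eq_abs]
  exact mul_le_mul_of_nonneg_left (abs_binetKernel_le ht) (exp_pos _).le

lemma integrableOn_exp_neg_mul_binetKernel {a : ℝ} (ha : 0 < a) :
    IntegrableOn (fun t => exp (-a * t) * binetKernel t) (Ioi 0) := by
  refine Integrable.mono' ((exp_neg_integrableOn_Ioi 0 ha).mul_const (1 / 2))
    ((by fun_prop : Measurable fun t => exp (-a * t)).mul
      measurable_binetKernel).aestronglyMeasurable ?_
  filter_upwards [ae_restrict_mem measurableSet_Ioi] with t ht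
  exact norm_exp_neg_mul_binetKernel_le a ht

lemma integral_exp_neg_mul_Ioi_zero {a : ℝ} (ha : 0 < a) :
    ∫ t in Ioi (0 : ℝ), exp (-a * t) = a⁻¹ := by
  rw [integral_exp_mul_Ioi (neg_neg_of_pos ha)]
  field_simp
  simp

noncomputable def binetLaplace (a : ℝ) : ℝ := ∫ t in Ioi 0, exp (-a * t) * binetKernel t

lemma abs_binetLaplace_le {a : ℝ} (ha : 0 < a) : |binetLaplace a| ≤ 1 / (2 * a) := by
  rw [← Real.norm_eq_abs]
  calc ‖binetLaplace a‖ ≤ ∫ t in Ioi 0, exp (-a * t) * (1 / 2) :=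
        norm_integral_le_of_norm_le ((exp_neg_integrableOn_Ioi 0 ha).mul_const _)
          ((ae_restrict_mem measurableSet_Ioi).mono fun t ht =>
            norm_exp_neg_mul_binetKernel_le a ht)
    _ = 1 / (2 * a) := by
        rw [integral_mul_const, integral_exp_neg_mul_Ioi_zero ha]
        field_simp

lemma tendsto_binetLaplace_atTop : Tendsto binetLaplace atTop (𝓝 0) := by
  refine squeeze_zero_norm' ?_ ((tendsto_inv_atTop_zero.comp
    (tendsto_id.const_mul_atTop two_pos)).congr fun a => one_div (2 * a) |>.symm)
  filter_upwards [eventually_gt_atTop 0] with a ha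
  exact (Real.norm_eq_abs _).trans_le (abs_binetLaplace_le ha)

section ExpDifference

variable {α β : ℝ}

lemma exp_neg_mul_sub_exp_neg_mul_le (t : ℝ) :
    exp (-α * t) - exp (-β * t) ≤ (β - α) * t * exp (-α * t) := by
  have h := add_one_le_exp (-((β - α) * t))
  have hsplit : exp (-β * t) = exp (-α * t) * exp (-((β - α) * t)) := by
    rw [← exp_add]; ring_nf
  nlinarith [exp_pos (-α * t)]

lemma integrableOn_exp_neg_mul_sub_exp_neg_mul_div (hα : 0 < α) (hαβ : α ≤ β) :
    IntegrableOn (fun t => (exp (-α * t) - exp (-β * t)) / t) (Ioi 0) := by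
  refine Integrable.mono' ((exp_neg_integrableOn_Ioi 0 hα).const_mul (β - α))
    (by fun_prop : Measurable fun t => (exp (-α * t) - exp (-β * t)) / t).aestronglyMeasurable ?_
  filter_upwards [ae_restrict_mem measurableSet_Ioi] with t (ht : 0 < t)
  have hnonneg : 0 ≤ exp (-α * t) - exp (-β * t) :=
    sub_nonneg.2 (exp_le_exp.2 (by nlinarith))
  rw [norm_of_nonneg (div_nonneg hnonneg ht.le), div_le_iff₀ ht]
  linarith [exp_neg_mul_sub_exp_neg_mul_le (α := α) (β := β) t]

lemma integral_exp_neg_mul_sub_exp_neg_mul_div (hα : 0 < α) (hαβ : α ≤ β) :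
    ∫ t in Ioi 0, (exp (-α * t) - exp (-β * t)) / t = log (β / α) := by
  have hfrullani := Frullani.integral_Ioi_eq (f := fun u => exp (-u)) (L := 1) (R := 0)
    ((by fun_prop : Continuous fun u => exp (-u)).locallyIntegrable.locallyIntegrableOn _) hα
    (hα.trans_le hαβ) ?_ tendsto_exp_neg_atTop_nhds_zero ?_
  · simpa [div_eq_inv_mul, neg_mul] using hfrullani
  · exact ((by fun_prop : Continuous fun u => exp (-u)).tendsto' 0 1 (by simp)).mono_left
      nhdsWithin_le_nhds
  · simpa [div_eq_inv_mul, neg_mul] using integrableOn_exp_neg_mul_sub_exp_neg_mul_div hα hαβ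

lemma hasDerivAt_exp_neg_mul_sub_exp_neg_mul (α β t : ℝ) :
    HasDerivAt (fun t => exp (-α * t) - exp (-β * t))
      (-α * exp (-α * t) + β * exp (-β * t)) t := by
  have hα := ((hasDerivAt_id' t).const_mul (-α)).exp
  have hβ := ((hasDerivAt_id' t).const_mul (-β)).exp
  exact (hα.fun_sub hβ).congr_deriv (by ring)

lemma tendsto_exp_neg_mul_atTop_nhds_zero (hα : 0 < α) :
    Tendsto (fun t => exp (-α * t)) atTop (𝓝 0) :=
  tendsto_exp_atBot.comp (tendsto_id.const_mul_atTop_of_neg (neg_neg_of_pos hα))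

/-- The integrand is the derivative of `(exp (-α t) - exp (-β t)) / t`, which tends to `β - α`
at `0` and to `0` at `∞`. -/
lemma integral_deriv_exp_neg_mul_sub_exp_neg_mul_div (hα : 0 < α) (hβ : 0 < β)
    (hint : IntegrableOn (fun t => ((-α * exp (-α * t) + β * exp (-β * t)) * t
      - (exp (-α * t) - exp (-β * t))) / t ^ 2) (Ioi 0)) :
    ∫ t in Ioi 0, ((-α * exp (-α * t) + β * exp (-β * t)) * t
      - (exp (-α * t) - exp (-β * t))) / t ^ 2 = α - β := by
  set E : ℝ → ℝ := fun t => exp (-α * t) - exp (-β * t)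
  have hE := hasDerivAt_exp_neg_mul_sub_exp_neg_mul α β
  have hslope : ∀ t ≠ 0, dslope E 0 t = E t / t := fun t ht => by
    simp [dslope_of_ne _ ht, slope_def_field, E]
  have hcont : ContinuousWithinAt (dslope E 0) (Ici 0) 0 :=
    (continuousAt_dslope_same.2 (hE 0).differentiableAt).continuousWithinAt
  have hderiv : ∀ t ∈ Ioi (0 : ℝ), HasDerivAt (dslope E 0)
      (((-α * exp (-α * t) + β * exp (-β * t)) * t - E t) / t ^ 2) t := fun t (ht : 0 < t) => by
    refine (((hE t).div (hasDerivAt_id t) ht.ne').congr_deriv (by simp [E])).congr_of_eventuallyEq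
      ?_
    filter_upwards [eventually_ne_nhds ht.ne'] with s hs
    exact hslope s hs
  have hlim : Tendsto (dslope E 0) atTop (𝓝 0) := by
    have hE_lim : Tendsto E atTop (𝓝 0) := by
      have h := (tendsto_exp_neg_mul_atTop_nhds_zero hα).sub
        (tendsto_exp_neg_mul_atTop_nhds_zero hβ)
      rwa [sub_zero] at h
    have hE_div : Tendsto (fun t => E t * t⁻¹) atTop (𝓝 0) := by
      simpa using hE_lim.mul tendsto_inv_atTop_zero
    refine hE_div.congr' ?_
    filter_upwards [eventually_gt_atTop 0] with t ht
    rw [hslope t ht.ne', div_eq_mul_inv]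
  rw [integral_Ioi_of_hasDerivAt_of_tendsto hcont hderiv hint hlim, dslope_same, (hE 0).deriv]
  simp only [mul_zero, exp_zero]
  ring

end ExpDifference

/-- The first term is half the derivative of `(exp (-a t) - exp (-(a + 2) t)) / t`, the other two
are Frullani integrands. -/
lemma exp_neg_mul_sub_mul_binetKernel (a : ℝ) {t : ℝ} (ht : 0 < t) :
    (exp (-a * t) - exp (-(a + 2) * t)) * binetKernel t
      = ((-a * exp (-a * t) + (a + 2) * exp (-(a + 2) * t)) * t
          - (exp (-a * t) - exp (-(a + 2) * t))) / t ^ 2 / 2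
        + (a / 2 * ((exp (-a * t) - exp (-(a + 1) * t)) / t)
          + (a + 2) / 2 * ((exp (-(a + 1) * t) - exp (-(a + 2) * t)) / t)) := by
  set u := exp (-t)
  have hu : 0 < u := exp_pos _
  have hu1 : u < 1 := exp_lt_one_iff.2 (neg_neg_of_pos ht)
  have h1 : exp (-(a + 1) * t) = exp (-a * t) * u := by rw [← exp_add]; ring_nf
  have h2 : exp (-(a + 2) * t) = exp (-a * t) * u ^ 2 := by
    rw [← exp_nat_mul, ← exp_add]; ring_nf
  have hsinh : sinh t = (1 - u ^ 2) / (2 * u) := by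
    rw [sinh_eq, show exp t = u⁻¹ by simp [u, exp_neg]]
    field_simp
    ring
  have hsinh_ne : 1 - u ^ 2 ≠ 0 := by nlinarith
  rw [binetKernel, h1, h2, hsinh]
  field_simp
  ring

lemma binetLaplace_sub_binetLaplace_add_two {a : ℝ} (ha : 0 < a) :
    binetLaplace a - binetLaplace (a + 2)
      = a / 2 * log ((a + 1) / a) + (a + 2) / 2 * log ((a + 2) / (a + 1)) - 1 := by
  have ha1 : a ≤ a + 1 := by linarith
  have ha2 : a + 1 ≤ a + 2 := by linarith
  set D : ℝ → ℝ := fun t => ((-a * exp (-a * t) + (a + 2) * exp (-(a + 2) * t)) * t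
    - (exp (-a * t) - exp (-(a + 2) * t))) / t ^ 2
  set F : ℝ → ℝ := fun t => a / 2 * ((exp (-a * t) - exp (-(a + 1) * t)) / t)
    + (a + 2) / 2 * ((exp (-(a + 1) * t) - exp (-(a + 2) * t)) / t)
  have hF₁ := (integrableOn_exp_neg_mul_sub_exp_neg_mul_div ha ha1).const_mul (a / 2)
  have hF₂ := (integrableOn_exp_neg_mul_sub_exp_neg_mul_div (by linarith) ha2).const_mul
    ((a + 2) / 2)
  have hF_int : IntegrableOn F (Ioi 0) := hF₁.add hF₂
  have hF : ∫ t in Ioi 0, F t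
      = a / 2 * log ((a + 1) / a) + (a + 2) / 2 * log ((a + 2) / (a + 1)) := by
    rw [integral_add hF₁ hF₂, integral_const_mul, integral_const_mul,
      integral_exp_neg_mul_sub_exp_neg_mul_div ha ha1,
      integral_exp_neg_mul_sub_exp_neg_mul_div (by linarith) ha2]
  have hsplit : EqOn (fun t => exp (-a * t) * binetKernel t - exp (-(a + 2) * t) * binetKernel t)
      (fun t => D t / 2 + F t) (Ioi 0) := fun t (ht : 0 < t) => by
    dsimp only
    rw [← sub_mul]
    exact exp_neg_mul_sub_mul_binetKernel a ht
  have hL₁ := integrableOn_exp_neg_mul_binetKernel ha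
  have hL₂ := integrableOn_exp_neg_mul_binetKernel (a := a + 2) (by linarith)
  have hD_int : IntegrableOn D (Ioi 0) := by
    refine (((hL₁.sub hL₂).sub hF_int).const_mul 2).congr ?_
    filter_upwards [ae_restrict_mem measurableSet_Ioi] with t ht
    simp only [Pi.sub_apply, hsplit ht]
    ring
  have hD : ∫ t in Ioi 0, D t = a - (a + 2) :=
    integral_deriv_exp_neg_mul_sub_exp_neg_mul_div ha (by linarith) hD_int
  rw [binetLaplace, binetLaplace, ← integral_sub hL₁ hL₂,
    setIntegral_congr_fun measurableSet_Ioi hsplit, integral_add (hD_int.div_const 2) hF_int,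
    integral_div, hD, hF]
  ring

lemma Gamma_add_nat_eq_mul_prod {s : ℝ} (hs : ∀ k : ℕ, s + k ≠ 0) (n : ℕ) :
    Gamma (s + n) = Gamma s * ∏ j ∈ Finset.range n, (s + j) := by
  induction n with
  | zero => simp
  | succ n ih =>
    rw [Finset.prod_range_succ, Nat.cast_succ, ← add_assoc, Gamma_add_one (hs n), ih]
    ring

lemma Gamma_add_nat_div_stirling_eq {s : ℝ} (hs : 0 < s) {n : ℕ} (hn : n ≠ 0) :
    Gamma (s + n) / (√(2 * π) * (n : ℝ) ^ (s - 1 / 2) * (n / exp 1) ^ n)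
      = Gamma s / GammaSeq s n * (Stirling.stirlingSeq n / √π) * (n / (s + n)) := by
  have hN : (0 : ℝ) < n := Nat.cast_pos.2 (Nat.pos_of_ne_zero hn)
  have hprod : 0 < ∏ j ∈ Finset.range n, (s + j) :=
    Finset.prod_pos fun j _ => by positivity
  have hpow : (n : ℝ) ^ (s - 1 / 2) = (n : ℝ) ^ s / √n := by
    rw [rpow_sub hN, sqrt_eq_rpow]
  rw [Gamma_add_nat_eq_mul_prod (fun k => by positivity) n, GammaSeq, Finset.prod_range_succ,
    Stirling.stirlingSeq, hpow, sqrt_mul zero_le_two, sqrt_mul zero_le_two]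
  have hΓ := (Gamma_pos_of_pos hs).ne'
  field_simp
  exact sq_sqrt hN.le

theorem tendsto_Gamma_add_nat_div_stirling {s : ℝ} (hs : 0 < s) :
    Tendsto (fun n : ℕ => Gamma (s + n) / (√(2 * π) * (n : ℝ) ^ (s - 1 / 2) * (n / exp 1) ^ n))
      atTop (𝓝 1) := by
  have hGamma : Tendsto (fun n => Gamma s / GammaSeq s n) atTop (𝓝 1) := by
    simpa [(Gamma_pos_of_pos hs).ne', Pi.div_def] using
      (tendsto_const_nhds (x := Gamma s)).div (GammaSeq_tendsto_Gamma s)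
        (Gamma_pos_of_pos hs).ne'
  have hStirling : Tendsto (fun n => Stirling.stirlingSeq n / √π) atTop (𝓝 1) := by
    simpa [(sqrt_pos.2 pi_pos).ne'] using Stirling.tendsto_stirlingSeq_sqrt_pi.div_const √π
  have hfrac : Tendsto (fun n : ℕ => (n : ℝ) / (s + n)) atTop (𝓝 1) := by
    simpa [add_comm] using tendsto_natCast_div_add_atTop s
  have hprod := (hGamma.mul hStirling).mul hfrac
  rw [one_mul, one_mul] at hprod
  refine hprod.congr' ?_
  filter_upwards [eventually_ne_atTop 0] with n hn
  exact (Gamma_add_nat_div_stirling_eq hs hn).symm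

noncomputable def stirlingRemainder (x : ℝ) : ℝ :=
  log (Gamma (x + 1 / 2)) - x * log x + x - log √(2 * π)

lemma stirlingRemainder_sub_stirlingRemainder_add_one {y : ℝ} (hy : 0 < y) :
    stirlingRemainder y - stirlingRemainder (y + 1)
      = y * log ((2 * y + 1) / (2 * y)) + (y + 1) * log ((2 * y + 2) / (2 * y + 1)) - 1 := by
  have hΓ : Gamma (y + 1 + 1 / 2) = (y + 1 / 2) * Gamma (y + 1 / 2) := by
    rw [add_right_comm, Gamma_add_one (by positivity)]
  rw [stirlingRemainder, stirlingRemainder, hΓ,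
    log_mul (by positivity) (Gamma_pos_of_pos (by positivity)).ne',
    show (2 * y + 1) / (2 * y) = (y + 1 / 2) / y by field_simp,
    show (2 * y + 2) / (2 * y + 1) = (y + 1) / (y + 1 / 2) by field_simp,
    log_div (by positivity) (by positivity), log_div (by positivity) (by positivity)]
  ring

lemma tendsto_mul_log_one_add_div_nat (x : ℝ) :
    Tendsto (fun n : ℕ => (x + n) * log (1 + x / n)) atTop (𝓝 x) := by
  have hmain := (tendsto_mul_log_one_add_div_atTop x).comp tendsto_natCast_atTop_atTop
  have hlog : Tendsto (fun n : ℕ => log (1 + x / n)) atTop (𝓝 0) := by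
    have h := (tendsto_const_nhds (x := (1 : ℝ))).add (tendsto_const_div_atTop_nhds_zero_nat x)
    rw [add_zero] at h
    simpa [Function.comp_def] using (continuousAt_log one_ne_zero).tendsto.comp h
  simpa [add_mul] using (hlog.const_mul x).add hmain

lemma stirlingRemainder_add_nat_eq {x : ℝ} (hx : 0 < x) {n : ℕ} (hn : n ≠ 0) :
    stirlingRemainder (x + n)
      = log (Gamma (x + 1 / 2 + n)
          / (√(2 * π) * (n : ℝ) ^ (x + 1 / 2 - 1 / 2) * (n / exp 1) ^ n))
        + (x - (x + n) * log (1 + x / n)) := by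
  have hN : (0 : ℝ) < n := Nat.cast_pos.2 (Nat.pos_of_ne_zero hn)
  rw [stirlingRemainder, add_sub_cancel_right, add_right_comm,
    log_div (Gamma_pos_of_pos (by positivity)).ne' (by positivity),
    log_mul (by positivity) (by positivity), log_mul (by positivity) (by positivity),
    log_rpow hN, log_pow, log_div hN.ne' (exp_pos 1).ne', log_exp,
    show 1 + x / n = (x + n) / n by field_simp; ring, log_div (by positivity) hN.ne']
  ring

lemma tendsto_stirlingRemainder_add_nat {x : ℝ} (hx : 0 < x) :
    Tendsto (fun n : ℕ => stirlingRemainder (x + n)) atTop (𝓝 0) := by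
  have hlog := ((continuousAt_log one_ne_zero).tendsto.comp
    (tendsto_Gamma_add_nat_div_stirling (s := x + 1 / 2) (by positivity)))
  have hsum := hlog.add ((tendsto_mul_log_one_add_div_nat x).const_sub x)
  rw [log_one, sub_self, add_zero] at hsum
  refine hsum.congr' ?_
  filter_upwards [eventually_ne_atTop 0] with n hn
  exact (stirlingRemainder_add_nat_eq hx hn).symm

lemma exp_stirlingRemainder {x : ℝ} (hx : 0 < x) :
    exp (stirlingRemainder x) = exp x * Gamma (x + 1 / 2) / (√(2 * π) * x ^ x) := by
  rw [stirlingRemainder, exp_sub, exp_add, exp_sub, exp_log (Gamma_pos_of_pos (by positivity)),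
    exp_log (by positivity), mul_comm x, ← rpow_def_of_pos hx]
  ring

/-- **Binet's formula**
`log Γ(x + 1/2) = x log x - x + log √(2π) + ∫₀^∞ e^{-2xt} binetKernel t dt`. -/
theorem binetLaplace_two_mul {x : ℝ} (hx : 0 < x) :
    binetLaplace (2 * x) = stirlingRemainder x := by
  set D : ℝ → ℝ := fun y => binetLaplace (2 * y) - stirlingRemainder y
  have hperiodic : ∀ y, 0 < y → D (y + 1) = D y := fun y hy => by
    have hL := binetLaplace_sub_binetLaplace_add_two (a := 2 * y) (by positivity)
    have hG := stirlingRemainder_sub_stirlingRemainder_add_one hy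
    rw [show 2 * y / 2 = y by ring, show (2 * y + 2) / 2 = y + 1 by ring] at hL
    simp only [D, mul_add, mul_one]
    linarith
  have hconst : ∀ n : ℕ, D (x + n) = D x := fun n => by
    induction n with
    | zero => simp
    | succ n ih => rw [Nat.cast_succ, ← add_assoc, hperiodic _ (by positivity), ih]
  have hlim : Tendsto (fun n : ℕ => D (x + n)) atTop (𝓝 0) := by
    have hL := tendsto_binetLaplace_atTop.comp
      ((tendsto_atTop_add_const_left _ x tendsto_natCast_atTop_atTop).const_mul_atTop two_pos)
    simpa using hL.sub (tendsto_stirlingRemainder_add_nat hx)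
  have hD : D x = 0 :=
    tendsto_nhds_unique (tendsto_const_nhds.congr fun n => (hconst n).symm) hlim
  exact sub_eq_zero.1 hD

lemma one_div_exp_sub_one_add_one_div_exp_add_one {u : ℝ} (hu : u ≠ 0) :
    1 / (exp u - 1) + 1 / (exp u + 1) = 1 / sinh u := by
  have h1 : exp u - 1 ≠ 0 := sub_ne_zero.2 (by rwa [Ne, exp_eq_one_iff])
  have h2 : exp u + 1 ≠ 0 := (add_pos (exp_pos u) one_pos).ne'
  have hsinh : sinh u = (exp u - 1) * (exp u + 1) / (2 * exp u) := by
    rw [sinh_eq, exp_neg]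
    field_simp
    ring
  rw [hsinh]
  field_simp
  ring

lemma weberBorelTransformReal_eq {ν ζ : ℝ} (hν : ν ≠ 0) (hζ : ζ ≠ 0) :
    weberBorelTransformReal ν ζ = (2 * ν)⁻¹ * binetKernel ((2 * ν)⁻¹ * ζ) := by
  rw [weberBorelTransformReal, one_div_exp_sub_one_add_one_div_exp_add_one (by positivity),
    binetKernel, inv_mul_eq_div]
  field_simp

end Binet

open Binet

theorem weber_borel_sum_binet (ν hbar : ℝ) (hν : 0 < ν) (hh : 0 < hbar) :
    IntegrableOn (fun ζ => Real.exp (-ζ / hbar) * weberBorelTransformReal ν ζ)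
      (Set.Ioi (0 : ℝ)) ∧
    Real.exp (∫ ζ in Set.Ioi (0 : ℝ), Real.exp (-ζ / hbar) * weberBorelTransformReal ν ζ)
      = Real.exp (ν / hbar) * Real.Gamma (ν / hbar + 1 / 2)
          / (Real.sqrt (2 * Real.pi) * (ν / hbar) ^ (ν / hbar)) := by
  have hx : 0 < ν / hbar := div_pos hν hh
  have hc : 0 < (2 * ν)⁻¹ := by positivity
  set F : ℝ → ℝ := fun t => exp (-(2 * (ν / hbar)) * t) * binetKernel t
  have hintegrand : EqOn (fun ζ => exp (-ζ / hbar) * weberBorelTransformReal ν ζ)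
      (fun ζ => (2 * ν)⁻¹ * F ((2 * ν)⁻¹ * ζ)) (Ioi 0) := fun ζ (hζ : 0 < ζ) => by
    simp only [F, weberBorelTransformReal_eq hν.ne' hζ.ne']
    field_simp
  refine ⟨?_, ?_⟩
  · refine IntegrableOn.congr_fun ?_ hintegrand.symm measurableSet_Ioi
    refine Integrable.const_mul ?_ _
    exact (integrableOn_Ioi_comp_mul_left_iff F 0 hc).2
      (by rw [mul_zero]; exact integrableOn_exp_neg_mul_binetKernel (by positivity))
  · rw [setIntegral_congr_fun measurableSet_Ioi hintegrand, integral_const_mul,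
      integral_comp_mul_left_Ioi _ 0 hc, mul_zero, inv_inv, smul_eq_mul, ← mul_assoc,
      inv_mul_cancel₀ (by positivity), one_mul, ← binetLaplace, binetLaplace_two_mul hx,
      exp_stirlingRemainder hx]
end

section
/- For γ ∉ ℤ_{≤0}, the Euler transformation holds: ₂F₁(α, β, γ; w) = (1-w)^{γ-α-β} ₂F₁(γ-α, γ-β, γ; w) for |w| < 1, where (1-w)^{γ-α-β} denotes the principal branch. -/
/-!
For `|w| < 1` both `₂F₁(γ-α, γ-β; γ; w)` and the binomial series
`(1-w)^(γ-α-β) = ₂F₁(α+β-γ, 1; 1; w)` converge absolutely, so their product is their Cauchy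
product. The coefficient of `wⁿ` in it is `(α)ₙ(β)ₙ/((γ)ₙ n!)` by the Pfaff–Saalschütz identity
`∑ₖ C(n,k) (a)ₖ (b)ₖ (c-a-b)ₙ₋ₖ (c+k)ₙ₋ₖ = (c-a)ₙ (c-b)ₙ`, which is proved by induction on `n`
with a Zeilberger certificate.
-/

open Complex

/-- The Gauss hypergeometric series ₂F₁(α,β,γ;w) = Σ (α)_n(β)_n wⁿ/((γ)_n n!). -/
noncomputable def hyp2F1 (α β γ w : ℂ) : ℂ :=
  ∑' n : ℕ,
    ((ascPochhammer ℂ n).eval α * (ascPochhammer ℂ n).eval β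
      / ((ascPochhammer ℂ n).eval γ * (n.factorial : ℂ))) * w ^ n

open Finset Polynomial

section Saalschutz

variable {R : Type*}

theorem ascPochhammer_eval_add [CommSemiring R] (x : R) (m n : ℕ) :
    (ascPochhammer R (m + n)).eval x =
      (ascPochhammer R m).eval x * (ascPochhammer R n).eval (x + m) := by
  simp [← ascPochhammer_mul, eval_comp]

theorem ascPochhammer_succ_eval_left [CommSemiring R] (x : R) (n : ℕ) :
    (ascPochhammer R (n + 1)).eval x = x * (ascPochhammer R n).eval (x + 1) := by
  simp [ascPochhammer_succ_left, eval_comp]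

variable [CommRing R] (a b c : R)

noncomputable def saalschutzTerm (n k : ℕ) : R :=
  n.choose k * (ascPochhammer R k).eval a * (ascPochhammer R k).eval b *
    (ascPochhammer R (n - k)).eval (c - a - b) * (ascPochhammer R (n - k)).eval (c + k)

-- Found by Zeilberger's algorithm: it makes the `n`-recurrence of `saalschutzTerm` telescope in `k`.
noncomputable def saalschutzCert (n k : ℕ) : R :=
  n.choose k * (ascPochhammer R (k + 1)).eval a * (ascPochhammer R (k + 1)).eval b *
    (ascPochhammer R (n - k)).eval (c - a - b) * (ascPochhammer R (n - k)).eval (c + k)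

theorem saalschutzTerm_succ_zero (n : ℕ) :
    saalschutzTerm a b c (n + 1) 0 =
      (c - a + n) * (c - b + n) * saalschutzTerm a b c n 0 - saalschutzCert a b c n 0 := by
  simp only [saalschutzTerm, saalschutzCert, Nat.choose_zero_right, Nat.sub_zero,
    ascPochhammer_succ_eval, ascPochhammer_zero, eval_one, Nat.cast_zero, Nat.cast_one, add_zero]
  ring

theorem saalschutzTerm_succ_succ (k m : ℕ) :
    saalschutzTerm a b c (k + m + 1) (k + 1) =
      (c - a + (k + m : ℕ)) * (c - b + (k + m : ℕ)) * saalschutzTerm a b c (k + m) (k + 1) +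
        saalschutzCert a b c (k + m) k - saalschutzCert a b c (k + m) (k + 1) := by
  cases m with
  | zero =>
    simp [saalschutzTerm, saalschutzCert]
  | succ m =>
    have hchoose : ((k + m + 1).choose (k + 1) : R) * (k + 1) = (k + m + 1).choose k * (m + 1) := by
      have := Nat.choose_succ_right_eq (k + m + 1) k
      rw [show k + m + 1 - k = m + 1 by omega] at this
      simpa using congrArg (Nat.cast (R := R)) this
    simp only [saalschutzTerm, saalschutzCert]
    rw [show k + (m + 1) + 1 - (k + 1) = m + 1 by omega, show k + (m + 1) - (k + 1) = m by omega,
      show k + (m + 1) - k = m + 1 by omega, Nat.choose_succ_succ',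
      ascPochhammer_succ_eval_left (c + (k : ℕ)) m]
    simp only [ascPochhammer_succ_eval (S := R) m, ascPochhammer_succ_eval (S := R) (k + 1)]
    push_cast [← add_assoc]
    -- Dividing out the common factor leaves `hchoose` times `c - a - b + m`.
    linear_combination (-((ascPochhammer R (k + 1)).eval a * (ascPochhammer R (k + 1)).eval b *
      (ascPochhammer R m).eval (c - a - b) * (ascPochhammer R m).eval (c + k + 1) *
      (c - a - b + m))) * hchoose

theorem sum_saalschutzTerm_succ (n : ℕ) :
    ∑ k ∈ range (n + 2), saalschutzTerm a b c (n + 1) k =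
      (c - a + n) * (c - b + n) * ∑ k ∈ range (n + 1), saalschutzTerm a b c n k := by
  have hterm : ∀ k ∈ range (n + 1), saalschutzTerm a b c (n + 1) (k + 1) =
      (c - a + n) * (c - b + n) * saalschutzTerm a b c n (k + 1) +
        (saalschutzCert a b c n k - saalschutzCert a b c n (k + 1)) := by
    intro k hk
    obtain ⟨m, rfl⟩ := Nat.exists_eq_add_of_le (Nat.lt_succ_iff.mp (mem_range.mp hk))
    rw [saalschutzTerm_succ_succ, add_sub_assoc]
  have hsum : ∑ k ∈ range (n + 1), saalschutzTerm a b c n k =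
      ∑ k ∈ range (n + 1), saalschutzTerm a b c n (k + 1) + saalschutzTerm a b c n 0 := by
    rw [← sum_range_succ' (saalschutzTerm a b c n), sum_range_succ _ (n + 1), left_eq_add]
    simp [saalschutzTerm]
  have hcert : saalschutzCert a b c n (n + 1) = 0 := by
    simp [saalschutzCert]
  rw [sum_range_succ', sum_congr rfl hterm, sum_add_distrib, sum_range_sub', ← mul_sum,
    saalschutzTerm_succ_zero, hsum, hcert]
  ring

theorem pfaff_saalschutz (n : ℕ) :
    ∑ k ∈ range (n + 1), saalschutzTerm a b c n k =
      (ascPochhammer R n).eval (c - a) * (ascPochhammer R n).eval (c - b) := by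
  induction n with
  | zero => simp [saalschutzTerm]
  | succ n ih =>
    rw [sum_saalschutzTerm_succ, ih, ascPochhammer_succ_eval, ascPochhammer_succ_eval]
    ring

end Saalschutz

section Coefficients

variable {𝕂 : Type*} [Field 𝕂]

theorem ascPochhammer_eval_ne_zero {c : 𝕂} (hc : ∀ k : ℕ, (k : 𝕂) ≠ -c) (n : ℕ) :
    (ascPochhammer 𝕂 n).eval c ≠ 0 := by
  simpa [ascPochhammer_eval_eq_zero_iff] using fun k _ => hc k

theorem ordinaryHypergeometricCoefficient_mul_eq_saalschutzTerm [CharZero 𝕂] (a b : 𝕂) {c : 𝕂}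
    (hc : ∀ k : ℕ, (k : 𝕂) ≠ -c) (k m : ℕ) :
    ordinaryHypergeometricCoefficient (c - a) (c - b) c k *
        ordinaryHypergeometricCoefficient (a + b - c) 1 1 m =
      saalschutzTerm (c - a) (c - b) c (k + m) k *
        ((k + m).factorial * (ascPochhammer 𝕂 (k + m)).eval c)⁻¹ := by
  have hfac : ((k + m).factorial : 𝕂) = (k + m).choose k * k.factorial * m.factorial := by
    rw [Nat.choose_symm_add]
    exact_mod_cast (Nat.add_choose_mul_factorial_mul_factorial k m).symm
  have hpoch := ascPochhammer_eval_add c k m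
  have hck := ascPochhammer_eval_ne_zero hc k
  have hckm : (ascPochhammer 𝕂 m).eval (c + k) ≠ 0 :=
    right_ne_zero_of_mul (hpoch ▸ ascPochhammer_eval_ne_zero hc (k + m))
  have hchoose : ((k + m).choose k : 𝕂) ≠ 0 := by
    exact_mod_cast (Nat.choose_pos (Nat.le_add_right k m)).ne'
  unfold ordinaryHypergeometricCoefficient
  rw [saalschutzTerm, Nat.add_sub_cancel_left, show c - (c - a) - (c - b) = a + b - c by ring,
    hfac, hpoch, ascPochhammer_eval_one]
  field_simp

theorem sum_ordinaryHypergeometricCoefficient_mul [CharZero 𝕂] (a b : 𝕂) {c : 𝕂}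
    (hc : ∀ k : ℕ, (k : 𝕂) ≠ -c) (n : ℕ) :
    ∑ k ∈ range (n + 1), ordinaryHypergeometricCoefficient (c - a) (c - b) c k *
        ordinaryHypergeometricCoefficient (a + b - c) 1 1 (n - k) =
      ordinaryHypergeometricCoefficient a b c n := by
  have hterm : ∀ k ∈ range (n + 1),
      ordinaryHypergeometricCoefficient (c - a) (c - b) c k *
          ordinaryHypergeometricCoefficient (a + b - c) 1 1 (n - k) =
        saalschutzTerm (c - a) (c - b) c n k * (n.factorial * (ascPochhammer 𝕂 n).eval c)⁻¹ := by
    intro k hk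
    obtain ⟨m, rfl⟩ := Nat.exists_eq_add_of_le (Nat.lt_succ_iff.mp (mem_range.mp hk))
    rw [Nat.add_sub_cancel_left, ordinaryHypergeometricCoefficient_mul_eq_saalschutzTerm a b hc]
  rw [sum_congr rfl hterm, ← sum_mul, pfaff_saalschutz, sub_sub_cancel, sub_sub_cancel]
  ring

end Coefficients

section Analytic

variable {𝕂 𝔸 : Type*} [RCLike 𝕂] [NormedDivisionRing 𝔸] [NormedAlgebra 𝕂 𝔸]

theorem one_le_ordinaryHypergeometricSeries_radius (a b : 𝕂) {c : 𝕂}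
    (hc : ∀ k : ℕ, (k : 𝕂) ≠ -c) : 1 ≤ (ordinaryHypergeometricSeries 𝔸 a b c).radius := by
  by_cases ha : ∃ k : ℕ, (k : 𝕂) = -a
  · obtain ⟨k, hk⟩ := ha
    rw [neg_eq_iff_eq_neg.mp hk.symm, ordinaryHypergeometric_radius_top_of_neg_nat₁]
    exact le_top
  by_cases hb : ∃ k : ℕ, (k : 𝕂) = -b
  · obtain ⟨k, hk⟩ := hb
    rw [neg_eq_iff_eq_neg.mp hk.symm, ordinaryHypergeometric_radius_top_of_neg_nat₂]
    exact le_top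
  push Not at ha hb
  rw [ordinaryHypergeometricSeries_radius_eq_one _ _ _ _ fun k => ⟨ha k, hb k, hc k⟩]

theorem summable_norm_ordinaryHypergeometricSeries (a b : 𝕂) {c : 𝕂}
    (hc : ∀ k : ℕ, (k : 𝕂) ≠ -c) {x : 𝔸} (hx : ‖x‖ < 1) :
    Summable fun n => ‖ordinaryHypergeometricSeries 𝔸 a b c n fun _ => x‖ := by
  refine (ordinaryHypergeometricSeries 𝔸 a b c).summable_norm_apply
    (Metric.eball_subset_eball (one_le_ordinaryHypergeometricSeries_radius a b hc) ?_)
  rw [← ENNReal.ofReal_one, Metric.eball_ofReal]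
  simpa using hx

theorem ordinaryHypergeometric_eq_mul [CompleteSpace 𝔸] (a b : 𝕂) {c : 𝕂}
    (hc : ∀ k : ℕ, (k : 𝕂) ≠ -c) {x : 𝔸} (hx : ‖x‖ < 1) :
    ₂F₁ a b c x = ₂F₁ (c - a) (c - b) c x * ₂F₁ (a + b - c) 1 1 x := by
  have h1 : ∀ k : ℕ, (k : 𝕂) ≠ -1 := by norm_cast; simp
  have hf := summable_norm_ordinaryHypergeometricSeries (𝔸 := 𝔸) (c - a) (c - b) hc hx
  have hg := summable_norm_ordinaryHypergeometricSeries (𝔸 := 𝔸) (a + b - c) 1 h1 hx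
  rw [ordinaryHypergeometric, ordinaryHypergeometric, ordinaryHypergeometric,
    FormalMultilinearSeries.sum, FormalMultilinearSeries.sum, FormalMultilinearSeries.sum,
    tsum_mul_tsum_eq_tsum_sum_range_of_summable_norm hf hg]
  refine tsum_congr fun n => ?_
  simp only [ordinaryHypergeometricSeries, FormalMultilinearSeries.ofScalars_apply_eq,
    smul_mul_smul_comm, ← pow_add]
  rw [← sum_ordinaryHypergeometricCoefficient_mul a b hc n, sum_smul]
  refine sum_congr rfl fun k hk => ?_
  rw [Nat.add_sub_cancel' (Nat.lt_succ_iff.mp (mem_range.mp hk))]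

end Analytic

theorem Complex.one_sub_cpow_eq_ordinaryHypergeometric (s : ℂ) {w : ℂ} (hw : ‖w‖ < 1) :
    (1 - w) ^ s = ₂F₁ (-s) 1 1 w := by
  have hsum := (one_add_cpow_hasFPowerSeriesOnBall_zero (a := s)).hasSum (y := -w)
    (by rw [← ENNReal.ofReal_one, Metric.eball_ofReal]; simpa using hw)
  rw [binomialSeries_eq_ordinaryHypergeometricSeries (b := 1) (by norm_cast; simp)] at hsum
  simp only [FormalMultilinearSeries.compContinuousLinearMap_apply, Function.comp_def,
    neg_apply, ContinuousLinearMap.id_apply, neg_neg, zero_add] at hsum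
  rw [← sub_eq_add_neg] at hsum
  exact hsum.tsum_eq.symm

theorem hyp2F1_eq_ordinaryHypergeometric (α β γ w : ℂ) : hyp2F1 α β γ w = ₂F₁ α β γ w := by
  rw [ordinaryHypergeometric, ordinaryHypergeometric_sum_eq]
  refine tsum_congr fun n => ?_
  rw [smul_eq_mul]
  ring

theorem euler_transformation (α β γ w : ℂ)
    (hγ : ∀ n : ℕ, γ ≠ -(n : ℂ)) (hw : ‖w‖ < 1) :
    hyp2F1 α β γ w = (1 - w) ^ (γ - α - β) * hyp2F1 (γ - α) (γ - β) γ w := by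
  have hγ' : ∀ k : ℕ, (k : ℂ) ≠ -γ := fun k h => hγ k (neg_eq_iff_eq_neg.mp h.symm)
  rw [hyp2F1_eq_ordinaryHypergeometric, hyp2F1_eq_ordinaryHypergeometric,
    one_sub_cpow_eq_ordinaryHypergeometric _ hw, show -(γ - α - β) = α + β - γ by ring,
    ordinaryHypergeometric_eq_mul α β hγ' hw, mul_comm]
end

section
/- If the Stokes multipliers s_j (j mod 5) are given by s_{-2} = iX_A, s_{-1} = i(X_A^{-1} - X_A^{-1}X_B^{-1} + X_B^{-1}), s₀ = iX_B, s₁ = i(X_B^{-1} - X_A X_B^{-1}), s₂ = i(X_A^{-1} - X_A^{-1}X_B), for any nonzero X_A, X_B ∈ ℂ, then the cyclic consistency conditions 1 + s_j s_{j-1} + i s_{j+2} = 0 hold for all j mod 5. -/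
/- STATEMENT 13: With s_{-2} = iX_A, s_{-1} = i(X_A⁻¹ - X_A⁻¹X_B⁻¹ + X_B⁻¹),
s₀ = iX_B, s₁ = i(X_B⁻¹ - X_A X_B⁻¹), s₂ = i(X_A⁻¹ - X_A⁻¹X_B), for any nonzero
X_A, X_B ∈ ℂ, the cyclic consistency 1 + s_j s_{j-1} + i s_{j+2} = 0 holds for all
j mod 5. -/
theorem stokes_consistency_before (XA XB : ℂ) (hA : XA ≠ 0) (hB : XB ≠ 0)
    (s : ZMod 5 → ℂ)
    (hm2 : s (-2) = Complex.I * XA)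
    (hm1 : s (-1) = Complex.I * (XA⁻¹ - XA⁻¹ * XB⁻¹ + XB⁻¹))
    (h0 : s 0 = Complex.I * XB)
    (h1 : s 1 = Complex.I * (XB⁻¹ - XA * XB⁻¹))
    (h2 : s 2 = Complex.I * (XA⁻¹ - XA⁻¹ * XB)) :
    ∀ j : ZMod 5, 1 + s j * s (j - 1) + Complex.I * s (j + 2) = 0 := by
  have h3 : s 3 = Complex.I * XA := by rw [show ((3:ZMod 5)) = -2 from by decide, hm2]
  have h4 : s 4 = Complex.I * (XA⁻¹ - XA⁻¹ * XB⁻¹ + XB⁻¹) := by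
    rw [show ((4:ZMod 5)) = -1 from by decide, hm1]
  have c0 : 1 + s 0 * s (0 - 1) + Complex.I * s (0 + 2) = 0 := by
    rw [show ((0:ZMod 5) - 1) = 4 from by decide, show ((0:ZMod 5) + 2) = 2 from by decide,
      h0, h4, h2]
    field_simp
    ring_nf
    simp [Complex.I_sq]
  have c1 : 1 + s 1 * s (1 - 1) + Complex.I * s (1 + 2) = 0 := by
    rw [show ((1:ZMod 5) - 1) = 0 from by decide, show ((1:ZMod 5) + 2) = 3 from by decide,
      h1, h0, h3]
    field_simp
    ring_nf
    simp [Complex.I_sq]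
  have c2 : 1 + s 2 * s (2 - 1) + Complex.I * s (2 + 2) = 0 := by
    rw [show ((2:ZMod 5) - 1) = 1 from by decide, show ((2:ZMod 5) + 2) = 4 from by decide,
      h2, h1, h4]
    field_simp
    ring_nf
    simp [Complex.I_sq]
  have c3 : 1 + s 3 * s (3 - 1) + Complex.I * s (3 + 2) = 0 := by
    rw [show ((3:ZMod 5) - 1) = 2 from by decide, show ((3:ZMod 5) + 2) = 0 from by decide,
      h3, h2, h0]
    field_simp
    ring_nf
    simp [Complex.I_sq]
  have c4 : 1 + s 4 * s (4 - 1) + Complex.I * s (4 + 2) = 0 := by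
    rw [show ((4:ZMod 5) - 1) = 3 from by decide, show ((4:ZMod 5) + 2) = 1 from by decide,
      h4, h3, h1]
    field_simp
    ring_nf
    simp [Complex.I_sq]
  intro j
  fin_cases j
  · exact c0
  · exact c1
  · exact c2
  · exact c3
  · exact c4
end

section
/- If the Stokes multipliers are s_{-2} = i(X_A - X_A X_B), s_{-1} = i(X_B^{-1} - X_A^{-1}X_B^{-1}), s₀ = iX_B, s₁ = i(X_A - X_A X_B^{-1} + X_B^{-1}), s₂ = iX_A^{-1}, for nonzero complex X_A, X_B, then the cyclic consistency conditions 1 + s_j s_{j-1} + i s_{j+2} = 0 hold for all j modulo 5. -/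
/-! Writing `s k = i * t k`, the consistency condition becomes the relation
`t (j + 2) = 1 - t j * t (j - 1)`, a rational identity in `X_A, X_B` that is checked at each
of the five residues. -/

open Complex

theorem ZMod.five_cases (j : ZMod 5) : j = 0 ∨ j = 1 ∨ j = 2 ∨ j = 3 ∨ j = 4 := by
  revert j
  decide

theorem reduced_stokes_recurrence {K : Type*} [Field K] {a b : K} (ha : a ≠ 0) (hb : b ≠ 0)
    (t : ZMod 5 → K) (h3 : t (-2) = a - a * b) (h4 : t (-1) = b⁻¹ - a⁻¹ * b⁻¹) (h0 : t 0 = b)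
    (h1 : t 1 = a - a * b⁻¹ + b⁻¹) (h2 : t 2 = a⁻¹) (j : ZMod 5) :
    t (j + 2) = 1 - t j * t (j - 1) := by
  reduce_mod_char at h3 h4
  rcases ZMod.five_cases j with rfl | rfl | rfl | rfl | rfl <;> reduce_mod_char <;>
    simp only [h0, h1, h2, h3, h4] <;> field_simp <;> ring

theorem stokes_consistency_after (XA XB : ℂ) (hA : XA ≠ 0) (hB : XB ≠ 0)
    (s : ZMod 5 → ℂ)
    (hm2 : s (-2) = Complex.I * (XA - XA * XB))
    (hm1 : s (-1) = Complex.I * (XB⁻¹ - XA⁻¹ * XB⁻¹))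
    (h0 : s 0 = Complex.I * XB)
    (h1 : s 1 = Complex.I * (XA - XA * XB⁻¹ + XB⁻¹))
    (h2 : s 2 = Complex.I * XA⁻¹) :
    ∀ j : ZMod 5, 1 + s j * s (j - 1) + Complex.I * s (j + 2) = 0 := by
  have neg_I_mul_I_mul (x : ℂ) : -I * (I * x) = x := by linear_combination (-x) * I_sq
  have recurrence := reduced_stokes_recurrence hA hB (fun k => -I * s k)
    (by rw [hm2, neg_I_mul_I_mul]) (by rw [hm1, neg_I_mul_I_mul]) (by rw [h0, neg_I_mul_I_mul])
    (by rw [h1, neg_I_mul_I_mul]) (by rw [h2, neg_I_mul_I_mul])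
  intro j
  linear_combination -recurrence j + s j * s (j - 1) * I_sq
end
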